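/- arXiv:1804.07929 — 3 statements merged into one kernel-verified Lean document; each statement's English description precedes it below -/
import Mathlib

section
/- For every prime p > 3, (p-1)! ≡ p·B_{2p-2}/(2p-2) - p·B_{p-1}/(p-1) - (1/2)·(p·B_{p-1}/(p-1))^2 (mod p^3), as a congruence of p-adic integers. -/
/-!
Write `j ^ (p - 1) = 1 + p qⱼ` for `0 < j < p` (Fermat quotients) and `(p - 1)! = p W - 1`
(Wilson quotient), and put `Q₁ = ∑ qⱼ`, `Q₂ = ∑ qⱼ²`. Expanding `((p - 1)!) ^ (p - 1)` to second
order in `p`, once as `∏ j ^ (p - 1)` and once as `(1 - p W) ^ (p - 1)`, relates `Q₁`, `Q₂` and `W`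
modulo `p³`, and modulo `p` it gives Lerch's formula `W ≡ Q₁`. On the other hand Faulhaber's
formula together with von Staudt–Clausen gives `p B_{p-1} ≡ ∑ j ^ (p - 1) = p - 1 + p Q₁` and
`p B_{2p-2} ≡ ∑ j ^ (2p - 2) = p - 1 + 2p Q₁ + p² Q₂` modulo `p³`. Eliminating `Q₁` and `Q₂` is
then a ring computation in `ZMod (p ^ 3)`.
-/

open Finset
open scoped Nat

/-- The factor `2` spares dividing by `2` in the second elementary symmetric function. -/
theorem Finset.exists_two_mul_prod_one_add_mul_eq {R ι : Type*} [CommRing R] (s : Finset ι)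
    (x : R) (a : ι → R) :
    ∃ z : R, 2 * ∏ i ∈ s, (1 + x * a i) =
      2 + 2 * x * ∑ i ∈ s, a i + x ^ 2 * ((∑ i ∈ s, a i) ^ 2 - ∑ i ∈ s, a i ^ 2) + x ^ 3 * z := by
  induction s using Finset.cons_induction with
  | empty => exact ⟨0, by simp⟩
  | cons i s hi ih =>
    obtain ⟨z, hz⟩ := ih
    refine ⟨a i * ((∑ j ∈ s, a j) ^ 2 - ∑ j ∈ s, a j ^ 2) + (1 + x * a i) * z, ?_⟩
    rw [prod_cons, sum_cons, sum_cons, mul_left_comm, hz]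
    ring

theorem IsUltrametricDist.norm_sub_le_of_le {E : Type*} [SeminormedAddGroup E]
    [IsUltrametricDist E] {x y : E} {r : ℝ} (hx : ‖x‖ ≤ r) (hy : ‖y‖ ≤ r) : ‖x - y‖ ≤ r := by
  rw [sub_eq_add_neg]
  exact (norm_add_le_max _ _).trans (max_le hx (by rwa [norm_neg]))

theorem succ_mul_sum_range_pow_sub_mul_bernoulli (n m : ℕ) :
    ((m : ℚ) + 1) * (∑ j ∈ range n, (j : ℚ) ^ m - n * bernoulli m) =
      ∑ k ∈ range m, bernoulli k * (m + 1).choose k * (n : ℚ) ^ (m + 1 - k) := by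
  rw [sum_range_pow, sum_range_succ, Nat.choose_succ_self_right, Nat.add_sub_cancel_left,
    pow_one, ← sum_div]
  field_simp
  push_cast
  ring

theorem sum_range_pow_eq_sum_Ico_one (n : ℕ) {m : ℕ} (hm : m ≠ 0) :
    ∑ j ∈ range n, (j : ℤ) ^ m = ∑ j ∈ Ico 1 n, (j : ℤ) ^ m := by
  rcases Nat.eq_zero_or_pos n with rfl | hn
  · simp
  · rw [range_eq_Ico, sum_eq_sum_Ico_succ_bot hn, Nat.cast_zero, zero_pow hm, zero_add]

/-- Junk unless `p ∤ a`, when the division is exact. -/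
def fermatQuotient (p : ℕ) (a : ℤ) : ℤ := (a ^ (p - 1) - 1) / p

def wilsonQuotient (p : ℕ) : ℤ := (((p - 1)! : ℕ) + 1 : ℤ) / p

section Quotients

variable {p : ℕ} [hp : Fact p.Prime]

theorem pow_sub_one_eq_one_add_mul_fermatQuotient {a : ℤ} (ha : IsCoprime a p) :
    a ^ (p - 1) = 1 + p * fermatQuotient p a := by
  rw [fermatQuotient, Int.mul_ediv_cancel' (Int.ModEq.pow_card_sub_one_eq_one hp.out ha).symm.dvd]
  ring

theorem factorial_sub_one_eq_mul_wilsonQuotient_sub_one :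
    (((p - 1)! : ℕ) : ℤ) = p * wilsonQuotient p - 1 := by
  have hdvd : (p : ℤ) ∣ ((p - 1)! : ℕ) + 1 := by
    rw [← ZMod.intCast_zmod_eq_zero_iff_dvd]
    push_cast
    rw [ZMod.wilsons_lemma]
    ring
  rw [wilsonQuotient, Int.mul_ediv_cancel' hdvd]
  ring

theorem isCoprime_of_mem_Ico_one {a : ℕ} (ha : a ∈ Ico 1 p) : IsCoprime (a : ℤ) p := by
  rw [Int.isCoprime_iff_gcd_eq_one, Int.gcd_natCast_natCast, Nat.gcd_comm]
  obtain ⟨h1, h2⟩ := mem_Ico.1 ha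
  exact Nat.coprime_of_lt_prime (by omega) h2 hp.out

theorem sum_range_pow_sub_one_eq :
    ∑ j ∈ range p, (j : ℤ) ^ (p - 1) = (p - 1) + p * ∑ a ∈ Ico 1 p, fermatQuotient p a := by
  rw [sum_range_pow_eq_sum_Ico_one p (by have := hp.out.two_le; omega),
    sum_congr rfl fun a ha =>
      pow_sub_one_eq_one_add_mul_fermatQuotient (isCoprime_of_mem_Ico_one ha),
    sum_add_distrib, ← mul_sum]
  simp [Nat.cast_sub hp.out.one_le]

theorem sum_range_pow_two_mul_sub_one_eq :
    ∑ j ∈ range p, (j : ℤ) ^ (2 * (p - 1)) = (p - 1) + 2 * p * ∑ a ∈ Ico 1 p, fermatQuotient p a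
      + p ^ 2 * ∑ a ∈ Ico 1 p, fermatQuotient p a ^ 2 := by
  rw [sum_range_pow_eq_sum_Ico_one p (by have := hp.out.two_le; omega),
    sum_congr rfl fun a ha => by
      rw [mul_comm, pow_mul,
        pow_sub_one_eq_one_add_mul_fermatQuotient (isCoprime_of_mem_Ico_one ha),
        show ∀ x : ℤ, (1 + p * x) ^ 2 = 1 + 2 * p * x + p ^ 2 * x ^ 2 from fun x => by ring],
    sum_add_distrib, sum_add_distrib, ← mul_sum, ← mul_sum]
  simp [Nat.cast_sub hp.out.one_le]

/-- Both sides come from `2 ((p - 1)!) ^ (p - 1) - 2`: on the left from `∏ j ^ (p - 1)`, on the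
right from `(1 - p W) ^ (p - 1)`. -/
theorem fermatQuotient_sums_modEq_wilsonQuotient (hp2 : p ≠ 2) :
    2 * p * ∑ a ∈ Ico 1 p, fermatQuotient p a
        + p ^ 2 * ((∑ a ∈ Ico 1 p, fermatQuotient p a) ^ 2 - ∑ a ∈ Ico 1 p, fermatQuotient p a ^ 2)
      ≡ -2 * (p - 1) * p * wilsonQuotient p + p ^ 2 * (p - 1) * (p - 2) * wilsonQuotient p ^ 2
        [ZMOD p ^ 3] := by
  set W := wilsonQuotient p
  have hprod : ∏ a ∈ Ico 1 p, (1 + p * fermatQuotient p a) = (((p - 1)! : ℕ) : ℤ) ^ (p - 1) := by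
    rw [← prod_congr rfl fun a ha =>
      pow_sub_one_eq_one_add_mul_fermatQuotient (isCoprime_of_mem_Ico_one ha), prod_pow,
      ← Nat.cast_prod, ← Nat.sub_add_cancel hp.out.one_le, Finset.prod_Ico_id_eq_factorial,
      Nat.add_sub_cancel]
  have hpow : ∏ _j ∈ range (p - 1), (1 + p * -W) = (((p - 1)! : ℕ) : ℤ) ^ (p - 1) := by
    rw [prod_const, card_range, factorial_sub_one_eq_mul_wilsonQuotient_sub_one,
      ← (hp.out.even_sub_one hp2).neg_pow]
    ring
  obtain ⟨z₁, hz₁⟩ := exists_two_mul_prod_one_add_mul_eq (Ico 1 p) (p : ℤ) (fermatQuotient p ·)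
  obtain ⟨z₂, hz₂⟩ := exists_two_mul_prod_one_add_mul_eq (range (p - 1)) (p : ℤ) fun _ => -W
  rw [hprod] at hz₁
  rw [hpow] at hz₂
  simp only [sum_const, card_range, nsmul_eq_mul, Nat.cast_sub hp.out.one_le] at hz₂
  exact Int.modEq_iff_dvd.2 ⟨z₁ - z₂, by linear_combination hz₁ - hz₂⟩

theorem wilsonQuotient_modEq_sum_fermatQuotient (hp2 : p ≠ 2) :
    wilsonQuotient p ≡ ∑ a ∈ Ico 1 p, fermatQuotient p a [ZMOD p] := by
  obtain ⟨z, hz⟩ := (fermatQuotient_sums_modEq_wilsonQuotient hp2).symm.dvd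
  set Q₁ := ∑ a ∈ Ico 1 p, fermatQuotient p a
  set Q₂ := ∑ a ∈ Ico 1 p, fermatQuotient p a ^ 2
  set W := wilsonQuotient p
  have hp0 : (p : ℤ) ≠ 0 := by exact_mod_cast hp.out.ne_zero
  have h2 : 2 * (Q₁ - W) = p * (-2 * W - (Q₁ ^ 2 - Q₂) + (p - 1) * (p - 2) * W ^ 2 + p * z) :=
    mul_left_cancel₀ hp0 (by linear_combination hz)
  have hp2' : ¬ (p : ℤ) ∣ 2 := by
    intro h
    have := Nat.le_of_dvd two_pos (by exact_mod_cast h)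
    have := hp.out.two_le
    omega
  exact Int.modEq_iff_dvd.2 ((Int.Prime.dvd_mul' hp.out ⟨_, h2⟩).resolve_left hp2')

end Quotients

namespace Padic

variable {p : ℕ} [hp : Fact p.Prime]

theorem norm_natCast_le_one (n : ℕ) : ‖(n : ℚ_[p])‖ ≤ 1 := by
  exact_mod_cast norm_int_le_one (p := p) n

theorem norm_natCast_le_norm_p_of_dvd {n : ℕ} (h : p ∣ n) : ‖(n : ℚ_[p])‖ ≤ ‖(p : ℚ_[p])‖ := by
  obtain ⟨c, rfl⟩ := h
  rw [Nat.cast_mul, norm_mul]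
  exact mul_le_of_le_one_right (norm_nonneg _) (norm_natCast_le_one c)

theorem norm_natCast_prime_eq_one {q : ℕ} (hq : q.Prime) (hqp : q ≠ p) : ‖(q : ℚ_[p])‖ = 1 :=
  norm_natCast_eq_one_iff.2 ((Nat.coprime_primes hp.out hq).2 hqp.symm)

theorem norm_natCast_div_prime_le_one {q : ℕ} (hq : q.Prime) : ‖(p : ℚ_[p]) / q‖ ≤ 1 := by
  rcases eq_or_ne q p with rfl | hqp
  · rw [div_self (by exact_mod_cast hq.ne_zero), norm_one]
  · rw [norm_div, norm_natCast_prime_eq_one hq hqp, div_one]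
    exact norm_p_lt_one.le

theorem norm_natCast_sub_one_eq_one : ‖(p : ℚ_[p]) - 1‖ = 1 := by
  rw [← norm_natCast_p_sub_one (p := p), Nat.cast_sub hp.out.one_le, Nat.cast_one]

theorem norm_p_pow_le_of_le {a b : ℕ} (h : a ≤ b) : ‖(p : ℚ_[p]) ^ b‖ ≤ ‖(p : ℚ_[p]) ^ a‖ := by
  rw [norm_pow, norm_pow]
  exact pow_le_pow_of_le_one (norm_nonneg _) norm_p_lt_one.le h

theorem exists_eq_p_pow_mul_of_norm_le {x : ℚ_[p]} {n : ℕ} (h : ‖x‖ ≤ ‖(p : ℚ_[p]) ^ n‖) :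
    ∃ z : ℤ_[p], x = p ^ n * z := by
  have hp0 : (p : ℚ_[p]) ^ n ≠ 0 := pow_ne_zero _ (by exact_mod_cast hp.out.ne_zero)
  refine ⟨⟨x / p ^ n, ?_⟩, ?_⟩
  · rw [norm_div]
    exact div_le_one_of_le₀ h (norm_nonneg _)
  · exact (mul_div_cancel₀ _ hp0).symm

theorem exists_bernoulli_two_mul_eq (k : ℕ) :
    ∃ N : ℤ, (bernoulli (2 * k) : ℚ_[p]) =
      N - ∑ q ∈ range (2 * k + 2) with q.Prime ∧ q - 1 ∣ 2 * k, ((q : ℚ_[p]))⁻¹ := by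
  obtain ⟨N, hN⟩ := Bernoulli.vonStaudt_clausen k
  refine ⟨N, eq_sub_of_add_eq ?_⟩
  have := congrArg (fun x : ℚ => (x : ℚ_[p])) hN
  push_cast at this
  simpa using this.symm

theorem norm_natCast_mul_bernoulli_le_one (n : ℕ) : ‖(p : ℚ_[p]) * bernoulli n‖ ≤ 1 := by
  rcases Nat.even_or_odd' n with ⟨k, rfl | rfl⟩
  · obtain ⟨N, hN⟩ := exists_bernoulli_two_mul_eq (p := p) k
    rw [hN, mul_sub, mul_sum]
    refine IsUltrametricDist.norm_sub_le_of_le ?_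
      (IsUltrametricDist.norm_sum_le_of_forall_le_of_nonneg zero_le_one fun q hq => ?_)
    · rw [norm_mul]
      exact mul_le_one₀ norm_p_lt_one.le (norm_nonneg _) (norm_int_le_one N)
    · exact norm_natCast_div_prime_le_one (mem_filter.1 hq).2.1
  · rcases Nat.eq_zero_or_pos k with rfl | hk
    · have h : (p : ℚ_[p]) * ((-1 / 2 : ℚ) : ℚ_[p]) = -((p : ℚ_[p]) / (2 : ℕ)) := by
        push_cast
        ring
      rw [bernoulli_one, h, norm_neg]
      exact norm_natCast_div_prime_le_one Nat.prime_two
    · rw [bernoulli_eq_zero_of_odd (odd_two_mul_add_one k) (by omega)]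
      simp

theorem norm_bernoulli_le_one {n : ℕ} (hn : ¬ p - 1 ∣ n) : ‖(bernoulli n : ℚ_[p])‖ ≤ 1 := by
  rcases Nat.even_or_odd' n with ⟨k, rfl | rfl⟩
  · obtain ⟨N, hN⟩ := exists_bernoulli_two_mul_eq (p := p) k
    rw [hN]
    refine IsUltrametricDist.norm_sub_le_of_le (norm_int_le_one N)
      (IsUltrametricDist.norm_sum_le_of_forall_le_of_nonneg zero_le_one fun q hq => ?_)
    obtain ⟨-, hq, hqk⟩ := mem_filter.1 hq
    rw [norm_inv, norm_natCast_prime_eq_one hq (by rintro rfl; exact hn hqk), inv_one]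
  · rcases Nat.eq_zero_or_pos k with rfl | hk
    · have hp2 : 2 ≠ p := by rintro rfl; exact hn (one_dvd _)
      rw [bernoulli_one]
      push_cast
      rw [norm_div, norm_neg, norm_one, ← Nat.cast_ofNat,
        norm_natCast_prime_eq_one Nat.prime_two hp2]
      norm_num
    · rw [bernoulli_eq_zero_of_odd (odd_two_mul_add_one k) (by omega)]
      simp

theorem norm_bernoulli_mul_natCast_mul_pow_succ_le (k c e : ℕ) :
    ‖(bernoulli k : ℚ_[p]) * c * (p : ℚ_[p]) ^ (e + 1)‖ ≤ ‖(p : ℚ_[p]) ^ e‖ := by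
  rw [pow_succ', show (bernoulli k : ℚ_[p]) * c * (p * p ^ e) = p * bernoulli k * c * p ^ e by ring,
    norm_mul, norm_mul]
  exact mul_le_of_le_one_left (norm_nonneg _)
    (mul_le_one₀ (norm_natCast_mul_bernoulli_le_one k) (norm_nonneg _) (norm_natCast_le_one c))

theorem succ_mul_sum_range_pow_sub_mul_bernoulli (m : ℕ) :
    ((m : ℚ_[p]) + 1) * (∑ j ∈ range p, (j : ℚ_[p]) ^ m - p * bernoulli m) =
      ∑ k ∈ range m, (bernoulli k : ℚ_[p]) * (m + 1).choose k * (p : ℚ_[p]) ^ (m + 1 - k) := by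
  exact_mod_cast congrArg (fun x : ℚ => (x : ℚ_[p]))
    (_root_.succ_mul_sum_range_pow_sub_mul_bernoulli p m)

theorem norm_sum_range_pow_sub_one_sub_mul_bernoulli_le (hp5 : 5 ≤ p) :
    ‖∑ j ∈ range p, (j : ℚ_[p]) ^ (p - 1) - p * bernoulli (p - 1)‖ ≤ ‖(p : ℚ_[p]) ^ 3‖ := by
  have h := succ_mul_sum_range_pow_sub_mul_bernoulli (p := p) (p - 1)
  rw [Nat.cast_sub hp.out.one_le, Nat.cast_one, sub_add_cancel,
    Nat.sub_add_cancel hp.out.one_le] at h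
  refine le_of_mul_le_mul_left ?_
    (norm_pos_iff.2 (by exact_mod_cast hp.out.ne_zero : (p : ℚ_[p]) ≠ 0))
  rw [← norm_mul, h, ← norm_mul, ← pow_succ']
  refine IsUltrametricDist.norm_sum_le_of_forall_le_of_nonneg (norm_nonneg _) fun k hk => ?_
  rw [mem_range] at hk
  rcases Nat.eq_zero_or_pos k with rfl | hk0
  · rw [show p - 0 = (p - 1) + 1 by omega]
    exact (norm_bernoulli_mul_natCast_mul_pow_succ_le _ _ _).trans (norm_p_pow_le_of_le (by omega))
  by_cases hodd : Odd k ∧ 1 < k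
  · simp [bernoulli_eq_zero_of_odd hodd.1 hodd.2]
  have hk3 : k ≤ p - 3 := by
    by_contra hk3
    refine hodd ⟨?_, by omega⟩
    rw [show k = p - 2 by omega]
    exact Nat.Odd.sub_even (by omega) (hp.out.odd_of_ne_two (by omega)) even_two
  rw [norm_mul, norm_mul, pow_succ', norm_mul, ← one_mul ‖(p : ℚ_[p])‖]
  gcongr
  · exact norm_bernoulli_le_one (Nat.not_dvd_of_pos_of_lt hk0 hk)
  · exact norm_natCast_le_norm_p_of_dvd (hp.out.dvd_choose_self hk0.ne' (by omega))
  · exact norm_p_pow_le_of_le (by omega)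

theorem norm_sum_range_pow_two_mul_sub_one_sub_mul_bernoulli_le (hp5 : 5 ≤ p) :
    ‖∑ j ∈ range p, (j : ℚ_[p]) ^ (2 * (p - 1)) - p * bernoulli (2 * (p - 1))‖ ≤
      ‖(p : ℚ_[p]) ^ 3‖ := by
  have h := succ_mul_sum_range_pow_sub_mul_bernoulli (p := p) (2 * (p - 1))
  have hunit : ‖((2 * (p - 1) : ℕ) : ℚ_[p]) + 1‖ = 1 := by
    rw [show ((2 * (p - 1) : ℕ) : ℚ_[p]) + 1 = ((2 * p - 1 : ℕ) : ℚ_[p]) by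
      push_cast [Nat.cast_sub hp.out.one_le, Nat.cast_sub (by omega : 1 ≤ 2 * p)]; ring,
      norm_natCast_eq_one_iff, hp.out.coprime_iff_not_dvd]
    intro hdvd
    have := Nat.dvd_sub (dvd_mul_left p 2) hdvd
    rw [show 2 * p - (2 * p - 1) = 1 by omega] at this
    exact hp.out.one_lt.ne' (Nat.dvd_one.1 this)
  rw [← one_mul ‖_ - _‖, ← hunit, ← norm_mul, h]
  refine IsUltrametricDist.norm_sum_le_of_forall_le_of_nonneg (norm_nonneg _) fun k hk => ?_
  rw [mem_range] at hk
  rcases le_or_gt k (p - 1) with hkp | hkp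
  · rw [show 2 * (p - 1) + 1 - k = (2 * (p - 1) - k) + 1 by omega]
    exact (norm_bernoulli_mul_natCast_mul_pow_succ_le _ _ _).trans (norm_p_pow_le_of_le (by omega))
  by_cases hodd : Odd k ∧ 1 < k
  · simp [bernoulli_eq_zero_of_odd hodd.1 hodd.2]
  have hk : k ≤ 2 * (p - 1) - 2 := by
    by_contra hk'
    exact hodd ⟨⟨p - 2, by omega⟩, by omega⟩
  rw [norm_mul, norm_mul, ← one_mul ‖(p : ℚ_[p]) ^ 3‖, ← one_mul (1 : ℝ)]
  gcongr
  · exact norm_bernoulli_le_one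
      ((Nat.not_dvd_iff_lt_mul_succ k (by omega)).2 ⟨1, by omega, by omega⟩)
  · exact norm_natCast_le_one _
  · exact norm_p_pow_le_of_le (by omega)

end Padic

namespace PadicInt

variable {p : ℕ} [hp : Fact p.Prime]

noncomputable def pBernoulli (p : ℕ) [Fact p.Prime] (n : ℕ) : ℤ_[p] :=
  ⟨p * bernoulli n, Padic.norm_natCast_mul_bernoulli_le_one n⟩

theorem coe_pBernoulli (n : ℕ) : (pBernoulli p n : ℚ_[p]) = p * bernoulli n := rfl

theorem norm_sub_le_iff_toZModPow_eq {x y : ℤ_[p]} {n : ℕ} :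
    ‖x - y‖ ≤ ‖(p : ℤ_[p]) ^ n‖ ↔ toZModPow n x = toZModPow n y := by
  rw [norm_p_pow, norm_le_pow_iff_mem_span_pow, ← ker_toZModPow, RingHom.mem_ker, map_sub,
    sub_eq_zero]

theorem toZModPow_pBernoulli_sub_one (hp5 : 5 ≤ p) :
    toZModPow 3 (pBernoulli p (p - 1)) =
      (((p : ℤ) - 1 + p * ∑ a ∈ Ico 1 p, fermatQuotient p a : ℤ) : ZMod (p ^ 3)) := by
  rw [← sum_range_pow_sub_one_eq, ← map_intCast (toZModPow 3), ← norm_sub_le_iff_toZModPow_eq,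
    norm_sub_rev, norm_def, coe_sub, coe_pBernoulli, Int.cast_sum, coe_sum]
  push_cast
  exact Padic.norm_sum_range_pow_sub_one_sub_mul_bernoulli_le hp5

theorem toZModPow_pBernoulli_two_mul_sub_one (hp5 : 5 ≤ p) :
    toZModPow 3 (pBernoulli p (2 * (p - 1))) =
      (((p : ℤ) - 1 + 2 * p * ∑ a ∈ Ico 1 p, fermatQuotient p a
        + p ^ 2 * ∑ a ∈ Ico 1 p, fermatQuotient p a ^ 2 : ℤ) : ZMod (p ^ 3)) := by
  rw [← sum_range_pow_two_mul_sub_one_eq, ← map_intCast (toZModPow 3),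
    ← norm_sub_le_iff_toZModPow_eq, norm_sub_rev, norm_def, coe_sub, coe_pBernoulli, Int.cast_sum,
    coe_sum]
  push_cast
  exact Padic.norm_sum_range_pow_two_mul_sub_one_sub_mul_bernoulli_le hp5

theorem toZModPow_two_mul_sq_mul_factorial_eq (hp5 : 5 ≤ p) :
    toZModPow 3 (2 * ((p : ℤ_[p]) - 1) ^ 2 * (((p - 1)! : ℕ) : ℤ_[p])) =
      toZModPow 3 (((p : ℤ_[p]) - 1) * pBernoulli p (2 * (p - 1))
        - 2 * ((p : ℤ_[p]) - 1) * pBernoulli p (p - 1) - pBernoulli p (p - 1) ^ 2) := by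
  obtain ⟨z, hz⟩ := (fermatQuotient_sums_modEq_wilsonQuotient (p := p) (by omega)).symm.dvd
  obtain ⟨t, ht⟩ := (wilsonQuotient_modEq_sum_fermatQuotient (p := p) (by omega)).dvd
  have hβ := toZModPow_pBernoulli_sub_one hp5
  have hδ := toZModPow_pBernoulli_two_mul_sub_one hp5
  set Q₁ := ∑ a ∈ Ico 1 p, fermatQuotient p a
  set Q₂ := ∑ a ∈ Ico 1 p, fermatQuotient p a ^ 2
  set W := wilsonQuotient p
  have hx : (p : ZMod (p ^ 3)) ^ 3 = 0 := by exact_mod_cast ZMod.natCast_self (p ^ 3)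
  have hz' := congrArg (Int.cast : ℤ → ZMod (p ^ 3)) hz
  have ht' := congrArg (Int.cast : ℤ → ZMod (p ^ 3)) ht
  have hF' := congrArg (Int.cast : ℤ → ZMod (p ^ 3))
    (factorial_sub_one_eq_mul_wilsonQuotient_sub_one (p := p))
  push_cast at hz' ht' hF' hβ hδ
  simp only [map_sub, map_mul, map_pow, map_natCast, map_ofNat, map_one, hβ, hδ]
  set x : ZMod (p ^ 3) := (p : ZMod (p ^ 3))
  -- What is left after `hF'` and `hz'` is `x² (x - 2) ((x - 1)² W² - Q₁²)`, and by Lerch's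
  -- formula `(x - 1) W + Q₁ = x (W + t)`.
  linear_combination (2 * (x - 1) ^ 2) * hF' + (x - 1) * hz'
    + x ^ 2 * (x - 2) * ((x - 1) * W - Q₁) * ht'
    + ((x - 2) * ((x - 1) * W - Q₁) * (W + t) + (x - 1) * z) * hx

end PadicInt

/-- Sun (2000): for a prime `p > 3`,
`(p-1)! ≡ p·B_{2p-2}/(2p-2) - p·B_{p-1}/(p-1) - (1/2)(p·B_{p-1}/(p-1))² (mod p³)` in `ℤ_p`. -/
theorem sun_wilson (p : ℕ) [hp : Fact p.Prime] (h3 : 3 < p) :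
    ∃ z : ℤ_[p],
      (Nat.factorial (p - 1) : ℚ_[p]) -
        ((p : ℚ_[p]) * ((bernoulli (2 * p - 2) : ℚ) : ℚ_[p]) / (2 * (p : ℚ_[p]) - 2)
          - (p : ℚ_[p]) * ((bernoulli (p - 1) : ℚ) : ℚ_[p]) / ((p : ℚ_[p]) - 1)
          - (1 / 2) * ((p : ℚ_[p]) * ((bernoulli (p - 1) : ℚ) : ℚ_[p]) / ((p : ℚ_[p]) - 1)) ^ 2)
      = (p : ℚ_[p]) ^ 3 * (z : ℚ_[p]) := by
  have hp5 : 5 ≤ p := hp.out.five_le_of_ne_two_of_ne_three (by omega) (by omega)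
  have hx1 := Padic.norm_natCast_sub_one_eq_one (p := p)
  have hunit : ‖2 * ((p : ℚ_[p]) - 1) ^ 2‖ = 1 := by
    rw [norm_mul, norm_pow, hx1, ← Nat.cast_ofNat,
      Padic.norm_natCast_prime_eq_one Nat.prime_two (by omega)]
    norm_num
  have hcong := PadicInt.norm_sub_le_iff_toZModPow_eq.2
    (PadicInt.toZModPow_two_mul_sq_mul_factorial_eq hp5)
  rw [PadicInt.norm_def, PadicInt.norm_p_pow, ← Padic.norm_p_pow] at hcong
  refine Padic.exists_eq_p_pow_mul_of_norm_le ?_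
  rw [← one_mul ‖_ - _‖, ← hunit, ← norm_mul, show 2 * p - 2 = 2 * (p - 1) by omega]
  convert hcong using 2
  have hx1' : (p : ℚ_[p]) - 1 ≠ 0 := norm_ne_zero_iff.1 (hx1 ▸ one_ne_zero)
  rw [show 2 * (p : ℚ_[p]) - 2 = 2 * ((p : ℚ_[p]) - 1) by ring]
  push_cast [PadicInt.coe_pBernoulli, show ((2 : ℤ_[p]) : ℚ_[p]) = 2 from rfl]
  field_simp
end

section
/- For every prime p ≥ 5, ∑_{k=1}^{p-1} 1/k^2 ≡ 0 (mod p). -/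
/-! The terms `1 / k²` are `p`-adic units, so the sum lies in `ℤ_[p]` and it suffices that its
residue in `ZMod p` vanishes. There `x ↦ x⁻¹` permutes `𝔽_p`, turning the sum into `∑ x ∈ 𝔽_p, x²`,
which vanishes because `2 < p - 1`. -/

open Finset

theorem ZMod.sum_range_natCast {M : Type*} [AddCommMonoid M] (n : ℕ) [NeZero n] (f : ZMod n → M) :
    ∑ k ∈ range n, f k = ∑ x : ZMod n, f x :=
  sum_nbij' Nat.cast ZMod.val (by simp) (by simp [ZMod.val_lt])
    (fun _ hk => ZMod.val_cast_of_lt (mem_range.1 hk)) (fun x _ => ZMod.natCast_zmod_val x)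
    (fun _ _ => rfl)

theorem FiniteField.sum_inv_pow_lt_card_sub_one {K : Type*} [Field K] [Fintype K] (i : ℕ)
    (h : i < Fintype.card K - 1) : ∑ x : K, x⁻¹ ^ i = 0 :=
  (Equiv.sum_comp (Equiv.inv K) (· ^ i)).trans (FiniteField.sum_pow_lt_card_sub_one K i h)

theorem ZMod.sum_Icc_inv_pow_eq_zero (p : ℕ) [Fact p.Prime] {i : ℕ} (hi₀ : i ≠ 0)
    (hi : i < p - 1) : ∑ k ∈ Icc 1 (p - 1), (k : ZMod p)⁻¹ ^ i = 0 := by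
  have hIcc : Icc 1 (p - 1) = (range p).erase 0 := by ext; simp; omega
  rw [hIcc, sum_erase _ (by simp [hi₀]), ZMod.sum_range_natCast p (fun x => x⁻¹ ^ i)]
  exact FiniteField.sum_inv_pow_lt_card_sub_one i (by rwa [ZMod.card])

theorem map_ringInverse {M₀ G₀ F : Type*} [MonoidWithZero M₀] [DivisionMonoid G₀] [FunLike F M₀ G₀]
    [MonoidHomClass F M₀ G₀] (f : F) {x : M₀} (hx : IsUnit x) : f (Ring.inverse x) = (f x)⁻¹ := by
  obtain ⟨u, rfl⟩ := hx
  rw [Ring.inverse_unit, map_units_inv]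

namespace PadicInt

variable {p : ℕ} [Fact p.Prime]

theorem isUnit_natCast_of_coprime {n : ℕ} (h : p.Coprime n) : IsUnit (n : ℤ_[p]) :=
  isUnit_iff.2 (norm_natCast_eq_one_iff.2 h)

theorem toZMod_eq_zero_iff_dvd {x : ℤ_[p]} : toZMod x = 0 ↔ (p : ℤ_[p]) ∣ x := by
  rw [← RingHom.mem_ker, ker_toZMod, maximalIdeal_eq_span_p, Ideal.mem_span_singleton]

end PadicInt

/-- Wolstenholme (1852): for a prime `p ≥ 5`, `∑_{k=1}^{p-1} 1/k² ≡ 0 (mod p)` in `ℤ_p`. -/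
theorem wolstenholme_harmonic_sq (p : ℕ) [hp : Fact p.Prime] (h5 : 5 ≤ p) :
    ∃ z : ℤ_[p],
      (∑ k ∈ Finset.Icc 1 (p - 1), (1 : ℚ_[p]) / (k : ℚ_[p]) ^ 2)
      = (p : ℚ_[p]) * (z : ℚ_[p]) := by
  have hunit : ∀ k ∈ Icc 1 (p - 1), IsUnit (k : ℤ_[p]) := fun k hk => by
    rw [mem_Icc] at hk
    exact PadicInt.isUnit_natCast_of_coprime
      (hp.out.coprime_iff_not_dvd.2 (Nat.not_dvd_of_pos_of_lt hk.1 (by omega)))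
  set s : ℤ_[p] := ∑ k ∈ Icc 1 (p - 1), Ring.inverse (k : ℤ_[p]) ^ 2
  have hcoe : (s : ℚ_[p]) = ∑ k ∈ Icc 1 (p - 1), (1 : ℚ_[p]) / (k : ℚ_[p]) ^ 2 := by
    rw [PadicInt.coe_sum]
    refine sum_congr rfl fun k hk => ?_
    have hinv : ((Ring.inverse (k : ℤ_[p]) : ℤ_[p]) : ℚ_[p]) = (k : ℚ_[p])⁻¹ :=
      map_ringInverse PadicInt.Coe.ringHom (hunit k hk)
    rw [PadicInt.coe_pow, hinv, one_div, inv_pow]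
  have hres : PadicInt.toZMod s = 0 := by
    rw [map_sum, ← ZMod.sum_Icc_inv_pow_eq_zero p two_ne_zero (by omega)]
    refine sum_congr rfl fun k hk => ?_
    rw [map_pow, map_ringInverse _ (hunit k hk), map_natCast]
  obtain ⟨z, hz⟩ := PadicInt.toZMod_eq_zero_iff_dvd.1 hres
  exact ⟨z, by rw [← hcoe, hz, PadicInt.coe_mul, PadicInt.coe_natCast]⟩
end

section
/- For every odd prime p, ∑_{k=1}^{(p-1)/2} 1/k ≡ -2·q_p(2) + p·q_p(2)^2 (mod p^2), where q_p(2) = (2^{p-1}-1)/p, as a congruence of p-adic integers. -/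
/-!
Write `p = 2m + 1`. The numbers `p - 1, …, p - m` are `m + 1, …, 2m`, and `p - 2, …, p - 2m` are
the odd numbers below `2m`, so `∏_{k ≤ m} (p - k) = (2m)!/m! = 2^m ∏_{k ≤ m} (p - 2k)`; in `ℤ_p`
this reads `∏_{k ≤ m} (1 - p/k) = 2^{p-1} ∏_{k ≤ m} (1 - p/(2k))`.
Expanding both products modulo `p³` in `H = ∑ 1/k` and `W = ∑ 1/k²`, writing
`2^{p-1} = 1 + pq`, and using `3W ≡ 0 (mod p)` (for `p > 3` because
`∑_{x ∈ 𝔽_p^×} x⁻² = ∑_{x ∈ 𝔽_p} x² = 0`) leaves `4(H + 2q) ≡ p(3H² + 4qH) (mod p²)`.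
Hence `H + 2q ≡ 0 (mod p)`, and since `3H² + 4qH = 4q² + (H + 2q)(3H - 2q)`, in fact
`H + 2q ≡ pq² (mod p²)`.
-/

open Finset
open scoped Nat

theorem exists_two_mul_prod_one_sub_mul {ι R : Type*} [CommRing R] (s : Finset ι) (x : R)
    (a : ι → R) :
    ∃ D, 2 * ∏ i ∈ s, (1 - x * a i) =
      2 - 2 * x * ∑ i ∈ s, a i + x ^ 2 * ((∑ i ∈ s, a i) ^ 2 - ∑ i ∈ s, a i ^ 2) +
        x ^ 3 * D := by
  classical
  induction s using Finset.induction_on with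
  | empty => exact ⟨0, by simp⟩
  | insert j s hj ih =>
    obtain ⟨D, hD⟩ := ih
    refine ⟨D - a j * ((∑ i ∈ s, a i) ^ 2 - ∑ i ∈ s, a i ^ 2) - x * a j * D, ?_⟩
    rw [prod_insert hj, sum_insert hj, sum_insert hj]
    linear_combination (1 - x * a j) * hD

theorem Nat.factorial_mul_two_pow_mul_prod_odd (m : ℕ) :
    m ! * 2 ^ m * ∏ i ∈ range m, (2 * i + 1) = (2 * m)! := by
  induction m with
  | zero => simp
  | succ m ih =>
    rw [prod_range_succ, show 2 * (m + 1) = 2 * m + 1 + 1 by ring, Nat.factorial_succ,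
      Nat.factorial_succ, Nat.factorial_succ, ← ih]
    ring

theorem Nat.descFactorial_two_mul_self (m : ℕ) :
    (2 * m).descFactorial m = 2 ^ m * ∏ i ∈ range m, (2 * i + 1) := by
  have h := Nat.factorial_mul_descFactorial (show m ≤ 2 * m by omega)
  rw [show 2 * m - m = m by omega, ← Nat.factorial_mul_two_pow_mul_prod_odd, mul_assoc] at h
  exact Nat.eq_of_mul_eq_mul_left (Nat.factorial_pos m) h

namespace Finset

theorem prod_Icc_natCast_sub_two_mul_add_one (R : Type*) [CommRing R] (m : ℕ) :
    ∏ k ∈ Icc 1 m, ((k : R) - (2 * m + 1)) =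
      2 ^ m * ∏ k ∈ Icc 1 m, (2 * (k : R) - (2 * m + 1)) := by
  rw [← Ico_add_one_right_eq_Icc, prod_Ico_eq_prod_range, prod_Ico_eq_prod_range,
    Nat.add_sub_cancel]
  have hL : ∏ i ∈ range m, (((1 + i : ℕ) : R) - (2 * m + 1)) =
      ∏ i ∈ range m, -(((2 * m - i : ℕ) : R)) :=
    prod_congr rfl fun i hi => by
      rw [mem_range] at hi
      push_cast [Nat.cast_sub (show i ≤ 2 * m by omega)]
      ring
  have hR : ∏ i ∈ range m, (2 * ((1 + i : ℕ) : R) - (2 * m + 1)) =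
      ∏ i ∈ range m, -(((2 * (m - 1 - i) + 1 : ℕ) : R)) :=
    prod_congr rfl fun i hi => by
      rw [mem_range] at hi
      push_cast [Nat.cast_sub (show i ≤ m - 1 by omega), Nat.cast_sub (show 1 ≤ m by omega)]
      ring
  rw [hL, hR, prod_neg, prod_neg, prod_range_reflect (fun i => (((2 * i + 1 : ℕ)) : R)),
    ← Nat.cast_prod, ← Nat.cast_prod, ← Nat.descFactorial_eq_prod_range,
    Nat.descFactorial_two_mul_self]
  push_cast
  ring

theorem sum_Icc_two_mul {M : Type*} [AddCommMonoid M] (f : ℕ → M) (m : ℕ) :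
    ∑ k ∈ Icc 1 (2 * m), f k = ∑ k ∈ Icc 1 m, (f k + f (2 * m + 1 - k)) := by
  rw [← Ico_add_one_right_eq_Icc, ← Ico_add_one_right_eq_Icc, sum_Ico_eq_sum_range,
    sum_Ico_eq_sum_range, Nat.add_sub_cancel, Nat.add_sub_cancel, two_mul, sum_range_add,
    sum_add_distrib, ← sum_range_reflect (fun i => f (1 + (m + i)))]
  congr 1
  refine sum_congr rfl fun i hi => ?_
  rw [mem_range] at hi
  congr 1
  omega

end Finset

namespace ZMod

theorem sum_range_natCast_s14 {M : Type*} [AddCommMonoid M] {n : ℕ} [NeZero n]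
    (f : ZMod n → M) : ∑ i ∈ range n, f i = ∑ x, f x :=
  sum_nbij' (fun i => (i : ZMod n)) val (by simp) (fun x _ => by simpa using val_lt x)
    (fun i hi => val_cast_of_lt (mem_range.mp hi)) (fun x _ => natCast_zmod_val x)
    (fun _ _ => rfl)

theorem sum_univ_eq_two_nsmul_sum_Icc {M : Type*} [AddCommMonoid M] {m : ℕ}
    (f : ZMod (2 * m + 1) → M) (hf0 : f 0 = 0) (hfneg : ∀ x, f (-x) = f x) :
    ∑ x, f x = 2 • ∑ k ∈ Icc 1 m, f k := by
  rw [← sum_range_natCast_s14, range_eq_Ico, sum_eq_sum_Ico_succ_bot (by omega),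
    Ico_add_one_right_eq_Icc, sum_Icc_two_mul, Nat.cast_zero, hf0, zero_add, two_nsmul,
    ← sum_add_distrib]
  refine sum_congr rfl fun k hk => ?_
  rw [mem_Icc] at hk
  rw [Nat.cast_sub (by omega), natCast_self, zero_sub, hfneg]

theorem three_mul_sum_Icc_inv_sq_eq_zero {p : ℕ} [Fact p.Prime] {m : ℕ}
    (hpm : p = 2 * m + 1) :
    3 * ∑ k ∈ Icc 1 m, ((k : ZMod p)⁻¹) ^ 2 = 0 := by
  obtain rfl | hp3 := eq_or_ne p 3
  · rw [show (3 : ZMod 3) = 0 from rfl, zero_mul]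
  have hcard : 2 < Fintype.card (ZMod p) - 1 := by
    rw [card]
    have := (Fact.out : p.Prime).two_le
    omega
  have hall : ∑ x : ZMod p, x⁻¹ ^ 2 = 0 := by
    rw [← FiniteField.sum_pow_lt_card_sub_one (ZMod p) 2 hcard]
    exact Equiv.sum_comp (Equiv.inv (ZMod p)) (· ^ 2)
  subst hpm
  rw [sum_univ_eq_two_nsmul_sum_Icc _ (by simp) (by simp), two_nsmul, ← two_mul] at hall
  have h2 : (2 : ZMod (2 * m + 1)) ≠ 0 := Ring.two_ne_zero (by rw [ringChar_zmod_n]; omega)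
  rw [(mul_eq_zero.mp hall).resolve_left h2, mul_zero]

end ZMod

namespace PadicInt

variable {p : ℕ} [Fact p.Prime]

theorem coe_inv_of_norm_eq_one {z : ℤ_[p]} (hz : ‖z‖ = 1) :
    ((z.inv : ℤ_[p]) : ℚ_[p]) = (z : ℚ_[p])⁻¹ :=
  eq_inv_of_mul_eq_one_right (by rw [← coe_mul, mul_inv hz, coe_one])

theorem toZMod_inv_of_norm_eq_one {z : ℤ_[p]} (hz : ‖z‖ = 1) :
    toZMod z.inv = (toZMod z)⁻¹ :=
  eq_inv_of_mul_eq_one_right (by rw [← map_mul, mul_inv hz, map_one])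

theorem norm_natCast_eq_one_of_lt {k : ℕ} (hk0 : 0 < k) (hkp : k < p) : ‖(k : ℤ_[p])‖ = 1 :=
  norm_natCast_eq_one_iff.mpr <|
    (Nat.Prime.coprime_iff_not_dvd Fact.out).mpr (Nat.not_dvd_of_pos_of_lt hk0 hkp)

theorem two_mul_inv_two (hp : p ≠ 2) : 2 * (2 : ℤ_[p]).inv = 1 := by
  have := (Fact.out : p.Prime).two_le
  exact mul_inv <| by
    exact_mod_cast norm_natCast_eq_one_of_lt (p := p) (k := 2) (by omega) (by omega)

theorem toZMod_two_ne_zero (hp : p ≠ 2) : toZMod (2 : ℤ_[p]) ≠ 0 := by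
  rw [map_ofNat]
  exact Ring.two_ne_zero (by rwa [ZMod.ringChar_zmod_n])

theorem exists_eq_mul_of_toZMod_eq_zero {x : ℤ_[p]} (hx : toZMod x = 0) : ∃ y, x = p * y := by
  rwa [← RingHom.mem_ker, ker_toZMod, maximalIdeal_eq_span_p, Ideal.mem_span_singleton] at hx

theorem exists_pow_sub_one_eq_one_add_mul {a : ℤ_[p]} (ha : toZMod a ≠ 0) :
    ∃ Q : ℤ_[p], a ^ (p - 1) = 1 + p * Q := by
  obtain ⟨Q, hQ⟩ := exists_eq_mul_of_toZMod_eq_zero (x := a ^ (p - 1) - 1) <| by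
    rw [map_sub, map_pow, ZMod.pow_card_sub_one_eq_one ha, map_one, sub_self]
  exact ⟨Q, by rw [← hQ]; ring⟩

theorem coe_sum_Icc_inv {n : ℕ} (hn : n < p) :
    ((∑ k ∈ Icc 1 n, (k : ℤ_[p]).inv : ℤ_[p]) : ℚ_[p]) = ∑ k ∈ Icc 1 n, (1 : ℚ_[p]) / k := by
  rw [coe_sum]
  refine sum_congr rfl fun k hk => ?_
  rw [mem_Icc] at hk
  rw [coe_inv_of_norm_eq_one (norm_natCast_eq_one_of_lt (by omega) (by omega)), one_div,
    coe_natCast]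

theorem prod_Icc_one_sub_mul_inv {m : ℕ} (hpm : p = 2 * m + 1) :
    ∏ k ∈ Icc 1 m, (1 - p * (k : ℤ_[p]).inv) =
      2 ^ (p - 1) * ∏ k ∈ Icc 1 m, (1 - p * ((2 : ℤ_[p]).inv * (k : ℤ_[p]).inv)) := by
  have hinv : ∀ k ∈ Icc 1 m, (k : ℤ_[p]) * (k : ℤ_[p]).inv = 1 := fun k hk => by
    rw [mem_Icc] at hk
    exact mul_inv (norm_natCast_eq_one_of_lt (by omega) (by omega))
  have h2 := two_mul_inv_two (p := p) (by omega)
  have hpR : (p : ℤ_[p]) = 2 * m + 1 := by exact_mod_cast hpm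
  have hP : ∏ k ∈ Icc 1 m, (k : ℤ_[p]) ≠ 0 := prod_ne_zero_iff.mpr fun k hk => by
    rw [mem_Icc] at hk
    exact_mod_cast (by omega : k ≠ 0)
  have hA : (∏ k ∈ Icc 1 m, (1 - p * (k : ℤ_[p]).inv)) * ∏ k ∈ Icc 1 m, (k : ℤ_[p]) =
      ∏ k ∈ Icc 1 m, ((k : ℤ_[p]) - (2 * m + 1)) := by
    rw [← prod_mul_distrib]
    refine prod_congr rfl fun k hk => ?_
    rw [hpR]
    linear_combination (-(2 * m + 1 : ℤ_[p])) * hinv k hk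
  have hB : (∏ k ∈ Icc 1 m, (1 - p * ((2 : ℤ_[p]).inv * (k : ℤ_[p]).inv))) *
      (2 ^ m * ∏ k ∈ Icc 1 m, (k : ℤ_[p])) =
        ∏ k ∈ Icc 1 m, (2 * (k : ℤ_[p]) - (2 * m + 1)) := by
    have h2m : (2 : ℤ_[p]) ^ m = ∏ _k ∈ Icc 1 m, 2 := by
      rw [prod_const, Nat.card_Icc, Nat.add_sub_cancel]
    rw [h2m, ← prod_mul_distrib, ← prod_mul_distrib]
    refine prod_congr rfl fun k hk => ?_
    rw [hpR]
    linear_combination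
      (-(2 * m + 1 : ℤ_[p])) * h2 - 2 * (2 * m + 1) * (2 : ℤ_[p]).inv * hinv k hk
  apply mul_right_cancel₀ hP
  rw [hA, prod_Icc_natCast_sub_two_mul_add_one, ← hB, show p - 1 = m + m by omega, pow_add]
  ring

theorem exists_three_mul_sum_inv_sq_eq_mul {m : ℕ} (hpm : p = 2 * m + 1) :
    ∃ V : ℤ_[p], 3 * ∑ k ∈ Icc 1 m, (k : ℤ_[p]).inv ^ 2 = p * V := by
  apply exists_eq_mul_of_toZMod_eq_zero
  have hk : ∀ k ∈ Icc 1 m, toZMod ((k : ℤ_[p]).inv ^ 2) = ((k : ZMod p)⁻¹) ^ 2 := fun k hk => by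
    rw [mem_Icc] at hk
    rw [map_pow, toZMod_inv_of_norm_eq_one (norm_natCast_eq_one_of_lt (by omega) (by omega)),
      map_natCast]
  rw [map_mul, map_ofNat, map_sum, sum_congr rfl hk]
  exact ZMod.three_mul_sum_Icc_inv_sq_eq_zero hpm

theorem exists_sum_inv_add_two_mul_sub_mul_sq_eq {m : ℕ} (hpm : p = 2 * m + 1) {Q : ℤ_[p]}
    (hQ : 2 ^ (p - 1) = 1 + p * Q) :
    ∃ z : ℤ_[p], ∑ k ∈ Icc 1 m, (k : ℤ_[p]).inv + 2 * Q - p * Q ^ 2 = p ^ 2 * z := by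
  obtain ⟨DA, hA⟩ := exists_two_mul_prod_one_sub_mul (Icc 1 m) (p : ℤ_[p])
    fun k => (k : ℤ_[p]).inv
  obtain ⟨DB, hB⟩ := exists_two_mul_prod_one_sub_mul (Icc 1 m) (p : ℤ_[p])
    fun k => (2 : ℤ_[p]).inv * (k : ℤ_[p]).inv
  simp only [← mul_sum, mul_pow] at hB
  obtain ⟨V, hV⟩ := exists_three_mul_sum_inv_sq_eq_mul hpm
  have hAB := prod_Icc_one_sub_mul_inv hpm
  rw [hQ] at hAB
  have h2 := two_mul_inv_two (p := p) (by omega)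
  set H := ∑ k ∈ Icc 1 m, (k : ℤ_[p]).inv
  set W := ∑ k ∈ Icc 1 m, (k : ℤ_[p]).inv ^ 2
  set h := (2 : ℤ_[p]).inv
  have hB' : 8 * ∏ k ∈ Icc 1 m, (1 - p * (h * (k : ℤ_[p]).inv)) =
      8 - 4 * p * H + p ^ 2 * (H ^ 2 - W) + 4 * p ^ 3 * DB := by
    linear_combination 4 * hB + (-4 * p * H + (2 * h + 1) * p ^ 2 * (H ^ 2 - W)) * h2
  -- the coefficient of `p³` left over once `hA` and `hB'` are inserted into `8 * hAB`
  set R := V - 4 * DA + Q * (H ^ 2 - W) + 4 * DB + 4 * p * Q * DB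
  have hp0 : (p : ℤ_[p]) ≠ 0 := by exact_mod_cast (Fact.out : p.Prime).ne_zero
  have key : 4 * (H + 2 * Q) = p * (3 * H ^ 2 + 4 * Q * H - p * R) :=
    mul_left_cancel₀ hp0 <| by
      linear_combination 4 * hA - (1 + p * Q) * hB' - 8 * hAB - p ^ 2 * hV
  obtain ⟨Y, hY⟩ : ∃ Y, H + 2 * Q = p * Y :=
    ⟨h ^ 2 * (3 * H ^ 2 + 4 * Q * H - p * R),
      by linear_combination h ^ 2 * key - (H + 2 * Q) * (2 * h + 1) * h2⟩
  exact ⟨h ^ 2 * (Y * (3 * H - 2 * Q) - R), by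
    linear_combination h ^ 2 * key + h ^ 2 * p * (3 * H - 2 * Q) * hY -
      (2 * h + 1) * (H + 2 * Q - p * Q ^ 2) * h2⟩

end PadicInt

/-- Lehmer (1938): for an odd prime `p`, with `q = q_p(2) = (2^{p-1}-1)/p`,
`∑_{k=1}^{(p-1)/2} 1/k ≡ -2q + p·q² (mod p²)` in `ℤ_p`. -/
theorem lehmer_half (p : ℕ) [hp : Fact p.Prime] (hodd : Odd p)
    (q : ℚ) (hq : q = ((2 ^ (p - 1) - 1 : ℚ)) / p) :
    ∃ z : ℤ_[p],
      (∑ k ∈ Finset.Icc 1 ((p - 1) / 2), (1 : ℚ_[p]) / (k : ℚ_[p])) -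
        (-2 * (q : ℚ_[p]) + (p : ℚ_[p]) * (q : ℚ_[p]) ^ 2)
      = (p : ℚ_[p]) ^ 2 * (z : ℚ_[p]) := by
  obtain ⟨m, hpm⟩ := hodd
  obtain ⟨Q, hQ⟩ := PadicInt.exists_pow_sub_one_eq_one_add_mul <|
    PadicInt.toZMod_two_ne_zero (p := p) (by omega)
  obtain ⟨z, hz⟩ := PadicInt.exists_sum_inv_add_two_mul_sub_mul_sq_eq hpm hQ
  have hqQ : (q : ℚ_[p]) = Q := by
    have hQ' : (2 : ℚ_[p]) ^ (p - 1) = 1 + p * Q := by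
      exact_mod_cast congrArg ((↑) : ℤ_[p] → ℚ_[p]) hQ
    have hp0 : (p : ℚ_[p]) ≠ 0 := by exact_mod_cast hp.out.ne_zero
    rw [hq]
    push_cast
    rw [hQ']
    field_simp
    ring
  refine ⟨z, ?_⟩
  have h2 : ((2 : ℤ_[p]) : ℚ_[p]) = 2 := rfl
  have hzQ := congrArg ((↑) : ℤ_[p] → ℚ_[p]) hz
  push_cast [PadicInt.coe_sum_Icc_inv (show m < p by omega), h2] at hzQ
  rw [show (p - 1) / 2 = m by omega, hqQ]
  linear_combination hzQ
end
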